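/- Let M = (S, A, Ψ, R, p), M̃ and M' = (S', A', Ψ', R', p') be MDPs with the same discount factor γ ∈ [0,1). Suppose M̃ is a relabeled variant of M via a relabeling h = (f, {g_s}_{s∈S}), M̃ and M' have the same transition structure and Π_*(M̃) = Π_*(M'), and ~ = (~_{S'}, ~_{Ψ'}) is a visible symmetry of M' (so (M', ~) is a hidden symmetry of M). For a policy π in the quotient MDP M'/~ define π'(s,a) := π([(f(s), g_s(a))]_{Ψ'}) / N_{Ψ'}(f(s), g_s(a)) for all (s,a) ∈ Ψ. Then π' is a policy in M, and if π is optimal in M'/~ then π' is optimal in M. Moreover, if ~ is simple then π'(s,a) = π(g_s(a) | [f(s)]). -/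

import Mathlib

/-- A Markov decision process with state type `S`, action type `A` and reward-label
type `Rw` (the countable bounded reward set is the image of `rval`).  `adm s` is the
finite nonempty set of admissible actions in state `s`, and `p s' r s a` is the
probability of moving to state `s'` receiving the reward labelled `r` when taking
action `a` in state `s` (the dynamic is extended by `0` off the admissible pairs). -/
structure MDP (S A Rw : Type*) where
  adm : S → Finset A
  adm_nonempty : ∀ s, (adm s).Nonempty
  rval : Rw → ℝ
  rval_bdd : ∃ C : ℝ, ∀ r, |rval r| ≤ C
  p : S → Rw → S → A → ℝ
  p_nonneg : ∀ s' r s a, 0 ≤ p s' r s a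
  p_adm : ∀ s a, a ∉ adm s → ∀ s' r, p s' r s a = 0
  p_sum : ∀ s a, a ∈ adm s → (∑' x : S × Rw, p x.1 x.2 s a) = 1

namespace MDP

variable {S A Rw S' A' Rw' : Type*}

/-- A policy: a probability distribution over the admissible actions in each state
(extended by `0` off the admissible pairs). -/
def IsPolicy (M : MDP S A Rw) (π : S → A → ℝ) : Prop :=
  (∀ s a, 0 ≤ π s a) ∧ (∀ s a, a ∉ M.adm s → π s a = 0) ∧
    ∀ s, ∑ a ∈ M.adm s, π s a = 1

/-- `stepReward M π k s` is the expected reward `E_{π,p}[R_{k+1} | S_0 = s]`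
received at step `k` of the trajectory generated by the policy `π` started at `s`. -/
noncomputable def stepReward (M : MDP S A Rw) (π : S → A → ℝ) : ℕ → S → ℝ
  | 0, s => ∑ a ∈ M.adm s, π s a * ∑' x : S × Rw, M.p x.1 x.2 s a * M.rval x.2
  | k + 1, s => ∑ a ∈ M.adm s, π s a *
      ∑' s' : S, (∑' r : Rw, M.p s' r s a) * M.stepReward π k s'

/-- The value function `V_π(s) = E_{π,p}[∑_k γ^k R_{k+1} | S_0 = s]`. -/
noncomputable def value (M : MDP S A Rw) (γ : ℝ) (π : S → A → ℝ) (s : S) : ℝ :=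
  ∑' k : ℕ, γ ^ k * M.stepReward π k s

/-- The optimal value function `V_*(s) = sup_π V_π(s)`. -/
noncomputable def optValue (M : MDP S A Rw) (γ : ℝ) (s : S) : ℝ :=
  ⨆ π : {π : S → A → ℝ // M.IsPolicy π}, M.value γ π.1 s

/-- A policy is optimal if its value function coincides with the optimal value
function in every state. -/
def IsOptimal (M : MDP S A Rw) (γ : ℝ) (π : S → A → ℝ) : Prop :=
  M.IsPolicy π ∧ ∀ s, M.value γ π s = M.optValue γ s

/-- The set `Ψ` of admissible state-action pairs, as a type. -/
abbrev Pairs (M : MDP S A Rw) : Type _ := {q : S × A // q.2 ∈ M.adm q.1}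

/-- A visible symmetry of an MDP: an equivalence relation `eqS` on states together
with an equivalence relation `eqP` on admissible state-action pairs such that
related pairs have related states, any admissible pair can be transported to any
state related to its own, and related pairs have the same dynamic on
`eqS`-equivalence classes. -/
structure VisibleSymmetry (M : MDP S A Rw) where
  eqS : Setoid S
  eqP : Setoid M.Pairs
  lift_action : ∀ (q : M.Pairs) (s2 : S), eqS.r q.1.1 s2 →
    ∃ (a2 : A) (h2 : a2 ∈ M.adm s2), eqP.r q ⟨(s2, a2), h2⟩
  rel_states : ∀ q1 q2 : M.Pairs, eqP.r q1 q2 → eqS.r q1.1.1 q2.1.1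
  rel_dyn : ∀ q1 q2 : M.Pairs, eqP.r q1 q2 → ∀ (s' : S) (r : Rw),
    (∑' x : {x : S // eqS.r x s'}, M.p x.1 r q1.1.1 q1.1.2) =
      ∑' x : {x : S // eqS.r x s'}, M.p x.1 r q2.1.1 q2.1.2

/-- A visible symmetry is simple if related state-action pairs carry the same action. -/
def VisibleSymmetry.Simple {M : MDP S A Rw} (V : M.VisibleSymmetry) : Prop :=
  ∀ q1 q2 : M.Pairs, V.eqP.r q1 q2 → q1.1.2 = q2.1.2

/-- `N_Ψ(s,a)`: the number of admissible actions in `s` whose pair with `s` is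
`eqP`-equivalent to `(s,a)`. -/
noncomputable def VisibleSymmetry.N {M : MDP S A Rw} (V : M.VisibleSymmetry)
    (s : S) (a : A) (h : a ∈ M.adm s) : ℕ :=
  Set.ncard {a' : A | ∃ h' : a' ∈ M.adm s, V.eqP.r ⟨(s, a), h⟩ ⟨(s, a'), h'⟩}

/-- A relabeling of the MDP `M` to the MDP `M'`: a bijection `f` on states and, for each
state `s`, a bijection `g s` from the admissible actions of `s` to those of `f s`,
which together transport the dynamic of `M` to that of `M'`. -/
structure Relabeling (M : MDP S A Rw) (M' : MDP S' A' Rw) where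
  f : S → S'
  g : S → A → A'
  f_bij : Function.Bijective f
  g_bij : ∀ s : S, Set.BijOn (g s) (M.adm s : Set A) (M'.adm (f s) : Set A')
  rval_eq : ∀ r : Rw, M'.rval r = M.rval r
  dyn : ∀ (s : S) (a : A), a ∈ M.adm s → ∀ (st : S) (r : Rw),
    M.p st r s a = M'.p (f st) r (f s) (g s a)

end MDP

/-!
A policy `π` is optimal exactly when no single action improves on its value, i.e.
`qValue γ V_π s a ≤ V_π s` for all admissible `(s, a)`: one direction is policy improvement, the
other is the comparison principle for the contracting Bellman operator `T_π`. Both the relabeling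
`h` and the quotient map `M' → M'/~` preserve these one-step action values, the latter because the
quotient dynamic is the fiberwise sum of the original one. Dividing by `N_Ψ'` makes the pulled-back
weights of a class of actions add up to its quotient weight, so the pullback of `π` is a policy
whose Bellman operator has `V_π ∘ [·]` as a bounded fixed point, hence as its value. Thus an
optimal `π` lifts to an optimal policy of `M'`, which is optimal in `M̃` by assumption, and is
carried back to `M` by the relabeling.
-/

lemma tsum_mul_tsum_comm {α β : Type*} {w : α → ℝ} {c : β → ℝ} (hw : Summable w)
    (hc : Summable c) (hw0 : 0 ≤ w) (hc0 : 0 ≤ c) {u : β → α → ℝ} {K : ℝ}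
    (hu : ∀ b x, |u b x| ≤ K) :
    ∑' x, w x * ∑' b, c b * u b x = ∑' b, c b * ∑' x, w x * u b x := by
  have hs : Summable (Function.uncurry fun b x => c b * (w x * u b x)) :=
    Summable.of_norm_bounded ((hc.mul_of_nonneg hw hc0 hw0).mul_right K) fun y => by
      simp only [Function.uncurry, Real.norm_eq_abs, abs_mul, abs_of_nonneg (hc0 y.1),
        abs_of_nonneg (hw0 y.2), mul_assoc]
      exact mul_le_mul_of_nonneg_left (mul_le_mul_of_nonneg_left (hu _ _) (hw0 _)) (hc0 _)
  calc ∑' x, w x * ∑' b, c b * u b x = ∑' x, ∑' b, c b * (w x * u b x) :=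
        tsum_congr fun x => by rw [← tsum_mul_left]; exact tsum_congr fun b => by ring
    _ = ∑' b, ∑' x, c b * (w x * u b x) := hs.tsum_comm
    _ = ∑' b, c b * ∑' x, w x * u b x := tsum_congr fun b => tsum_mul_left

lemma summable_geometric_mul {γ : ℝ} (hγ0 : 0 ≤ γ) (hγ1 : γ < 1) {u : ℕ → ℝ} {C : ℝ}
    (hu : ∀ k, |u k| ≤ C) : Summable fun k => γ ^ k * u k :=
  Summable.of_norm_bounded ((summable_geometric_of_lt_one hγ0 hγ1).mul_right C) fun k => by
    rw [Real.norm_eq_abs, abs_mul, abs_pow, abs_of_nonneg hγ0]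
    exact mul_le_mul_of_nonneg_left (hu k) (pow_nonneg hγ0 k)

lemma tsum_mul_comp_eq_tsum_fiber {α β : Type*} (φ : α → β) {w : α → ℝ} (hw : Summable w)
    {u : β → ℝ} {K : ℝ} (hu : ∀ y, |u y| ≤ K) :
    ∑' x, w x * u (φ x) = ∑' y, (∑' x : φ ⁻¹' {y}, w x) * u y := by
  have hs : Summable fun x => w x * u (φ x) :=
    Summable.of_norm_bounded (hw.abs.mul_right K) fun x => by
      rw [Real.norm_eq_abs, abs_mul]
      exact mul_le_mul_of_nonneg_left (hu _) (abs_nonneg _)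
  rw [← (hs.hasSum.tsum_fiberwise φ).tsum_eq]
  refine tsum_congr fun y => ?_
  rw [← tsum_mul_right]
  exact tsum_congr fun x => by rw [show φ x = y from x.2]

namespace MDP

open Finset

variable {S A Rw : Type*} (N : MDP S A Rw)

noncomputable def qValue (γ : ℝ) (W : S → ℝ) (s : S) (a : A) : ℝ :=
  ∑' x : S × Rw, N.p x.1 x.2 s a * (N.rval x.2 + γ * W x.1)

noncomputable def bellman (γ : ℝ) (π : S → A → ℝ) (W : S → ℝ) (s : S) : ℝ :=
  ∑ a ∈ N.adm s, π s a * N.qValue γ W s a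

section Transition

variable {N} {s : S} {a : A}

lemma summable_p (ha : a ∈ N.adm s) : Summable fun x : S × Rw => N.p x.1 x.2 s a := by
  by_contra h
  simpa [tsum_eq_zero_of_not_summable h] using N.p_sum s a ha

lemma summable_p_mul (ha : a ∈ N.adm s) {u : S × Rw → ℝ} {K : ℝ} (hu : ∀ x, |u x| ≤ K) :
    Summable fun x : S × Rw => N.p x.1 x.2 s a * u x :=
  Summable.of_norm_bounded ((summable_p ha).mul_right K) fun x => by
    rw [Real.norm_eq_abs, abs_mul, abs_of_nonneg (N.p_nonneg _ _ _ _)]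
    exact mul_le_mul_of_nonneg_left (hu x) (N.p_nonneg _ _ _ _)

lemma tsum_p_mul_le (ha : a ∈ N.adm s) {u : S × Rw → ℝ} {K c : ℝ} (hu : ∀ x, |u x| ≤ K)
    (hc : ∀ x, u x ≤ c) : ∑' x : S × Rw, N.p x.1 x.2 s a * u x ≤ c :=
  calc ∑' x : S × Rw, N.p x.1 x.2 s a * u x ≤ ∑' x : S × Rw, N.p x.1 x.2 s a * c :=
        (summable_p_mul ha hu).tsum_le_tsum
          (fun x => mul_le_mul_of_nonneg_left (hc x) (N.p_nonneg _ _ _ _))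
          ((summable_p ha).mul_right c)
    _ = c := by rw [tsum_mul_right, N.p_sum s a ha, one_mul]

lemma abs_tsum_p_mul_le (ha : a ∈ N.adm s) {u : S × Rw → ℝ} {K : ℝ} (hu : ∀ x, |u x| ≤ K) :
    |∑' x : S × Rw, N.p x.1 x.2 s a * u x| ≤ K := by
  refine abs_le.2 ⟨?_, tsum_p_mul_le ha hu fun x => (abs_le.1 (hu x)).2⟩
  have hneg := tsum_p_mul_le ha (u := fun x => -u x) (by simpa using hu)
    fun x => neg_le.1 (abs_le.1 (hu x)).1
  simp only [mul_neg, tsum_neg] at hneg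
  linarith

lemma tsum_transition_mul (ha : a ∈ N.adm s) {G : S → ℝ} {K : ℝ} (hG : ∀ s', |G s'| ≤ K) :
    ∑' s', (∑' r, N.p s' r s a) * G s' = ∑' x : S × Rw, N.p x.1 x.2 s a * G x.1 := by
  rw [(summable_p_mul ha fun x => hG x.1).tsum_prod]
  simp_rw [← tsum_mul_right]

end Transition

section Policy

variable {N} {π : S → A → ℝ}

lemma IsPolicy.sum_mul_le (hπ : N.IsPolicy π) (s : S) {F : A → ℝ} {c : ℝ}
    (hF : ∀ a ∈ N.adm s, F a ≤ c) : ∑ a ∈ N.adm s, π s a * F a ≤ c :=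
  calc ∑ a ∈ N.adm s, π s a * F a ≤ ∑ a ∈ N.adm s, π s a * c :=
        sum_le_sum fun a ha => mul_le_mul_of_nonneg_left (hF a ha) (hπ.1 s a)
    _ = c := by rw [← sum_mul, hπ.2.2 s, one_mul]

lemma IsPolicy.abs_sum_mul_le (hπ : N.IsPolicy π) (s : S) {F : A → ℝ} {K : ℝ}
    (hF : ∀ a ∈ N.adm s, |F a| ≤ K) : |∑ a ∈ N.adm s, π s a * F a| ≤ K := by
  refine abs_le.2 ⟨?_, hπ.sum_mul_le s fun a ha => (abs_le.1 (hF a ha)).2⟩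
  have hneg := hπ.sum_mul_le s (F := fun a => -F a) fun a ha => neg_le.1 (abs_le.1 (hF a ha)).1
  simp only [mul_neg, sum_neg_distrib] at hneg
  linarith

end Policy

section Value

variable {N} {π : S → A → ℝ} {γ : ℝ}

lemma IsPolicy.abs_stepReward_le (hπ : N.IsPolicy π) {C : ℝ} (hC : ∀ r, |N.rval r| ≤ C) :
    ∀ k s, |N.stepReward π k s| ≤ C
  | 0, s => hπ.abs_sum_mul_le s fun _ ha => abs_tsum_p_mul_le ha fun x => hC x.2
  | k + 1, s => hπ.abs_sum_mul_le s fun _ ha => by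
      rw [tsum_transition_mul ha (hπ.abs_stepReward_le hC k)]
      exact abs_tsum_p_mul_le ha fun x => hπ.abs_stepReward_le hC k x.1

lemma exists_abs_value_le (hγ0 : 0 ≤ γ) (hγ1 : γ < 1) :
    ∃ K, ∀ π, N.IsPolicy π → ∀ s, |N.value γ π s| ≤ K := by
  obtain ⟨C, hC⟩ := N.rval_bdd
  refine ⟨C * (1 - γ)⁻¹, fun π hπ s => ?_⟩
  rw [← tsum_geometric_of_lt_one hγ0 hγ1, ← tsum_mul_left, ← Real.norm_eq_abs]
  refine tsum_of_norm_bounded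
    (((hasSum_geometric_of_lt_one hγ0 hγ1).mul_left C).summable.hasSum) fun k => ?_
  rw [Real.norm_eq_abs, abs_mul, abs_pow, abs_of_nonneg hγ0, mul_comm C]
  exact mul_le_mul_of_nonneg_left (hπ.abs_stepReward_le hC k s) (pow_nonneg hγ0 k)

lemma IsPolicy.bellman_value (hπ : N.IsPolicy π) (hγ0 : 0 ≤ γ) (hγ1 : γ < 1) (s : S) :
    N.bellman γ π (N.value γ π) s = N.value γ π s := by
  obtain ⟨C, hC⟩ := N.rval_bdd
  obtain ⟨_, hV⟩ := N.exists_abs_value_le hγ0 hγ1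
  have hstep := hπ.abs_stepReward_le hC
  have hsucc : ∀ k, N.stepReward π (k + 1) s =
      ∑ a ∈ N.adm s, π s a * ∑' x : S × Rw, N.p x.1 x.2 s a * N.stepReward π k x.1 :=
    fun k => sum_congr rfl fun a ha => by rw [← tsum_transition_mul ha (hstep k)]
  have hq : ∀ a ∈ N.adm s, N.qValue γ (N.value γ π) s a =
      ∑' x : S × Rw, N.p x.1 x.2 s a * N.rval x.2 +
        γ * ∑' k, γ ^ k * ∑' x : S × Rw, N.p x.1 x.2 s a * N.stepReward π k x.1 := by
    intro a ha
    have hsp := summable_p_mul ha fun x => hC x.2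
    have hvp := summable_p_mul ha fun x => hV π hπ x.1
    calc N.qValue γ (N.value γ π) s a
        = ∑' x : S × Rw, N.p x.1 x.2 s a * N.rval x.2 +
            γ * ∑' x : S × Rw, N.p x.1 x.2 s a * N.value γ π x.1 := by
          rw [qValue, ← tsum_mul_left, ← hsp.tsum_add (hvp.mul_left γ)]
          exact tsum_congr fun x => by ring
      _ = _ := by
          rw [← tsum_mul_tsum_comm (summable_p ha) (summable_geometric_of_lt_one hγ0 hγ1)
            (fun x => N.p_nonneg _ _ _ _) (fun k => pow_nonneg hγ0 k) fun k x => hstep k x.1]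
          rfl
  have hsum := summable_geometric_mul hγ0 hγ1 fun k => hstep k s
  calc N.bellman γ π (N.value γ π) s
      = N.stepReward π 0 s + γ * ∑ a ∈ N.adm s, π s a *
          ∑' k, γ ^ k * ∑' x : S × Rw, N.p x.1 x.2 s a * N.stepReward π k x.1 := by
        rw [bellman, sum_congr rfl fun a ha => by rw [hq a ha], mul_sum]
        simp only [mul_add, sum_add_distrib]
        congr 1
        exact sum_congr rfl fun a _ => by ring
    _ = N.stepReward π 0 s + γ * ∑' k, γ ^ k * N.stepReward π (k + 1) s := by
        congr 2
        simp only [hsucc, Finset.mul_sum]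
        rw [Summable.tsum_finsetSum fun a ha => ?_]
        · refine sum_congr rfl fun a _ => ?_
          rw [← tsum_mul_left]
          exact tsum_congr fun k => by ring
        · refine summable_geometric_mul hγ0 hγ1 (C := |π s a| * C) fun k => ?_
          rw [abs_mul]
          exact mul_le_mul_of_nonneg_left (abs_tsum_p_mul_le ha fun x => hstep k x.1)
            (abs_nonneg _)
    _ = N.value γ π s := by
        rw [value, hsum.tsum_eq_zero_add, ← tsum_mul_left]
        simp only [pow_zero, one_mul, pow_succ]
        congr 1; exact tsum_congr fun k => by ring

end Value

section Comparison

variable {N} {π : S → A → ℝ} {γ : ℝ}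

lemma summable_qValue {s : S} {a : A} (ha : a ∈ N.adm s) {W : S → ℝ} {K : ℝ}
    (hW : ∀ s', |W s'| ≤ K) :
    Summable fun x : S × Rw => N.p x.1 x.2 s a * (N.rval x.2 + γ * W x.1) := by
  obtain ⟨C, hC⟩ := N.rval_bdd
  refine summable_p_mul ha (K := C + |γ| * K) fun x => (abs_add_le _ _).trans ?_
  rw [abs_mul]
  exact add_le_add (hC x.2) (mul_le_mul_of_nonneg_left (hW x.1) (abs_nonneg γ))

lemma qValue_sub_qValue_le (hγ0 : 0 ≤ γ) {s : S} {a : A} (ha : a ∈ N.adm s) {U U' : S → ℝ}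
    {K K' c : ℝ} (hU : ∀ s', |U s'| ≤ K) (hU' : ∀ s', |U' s'| ≤ K')
    (h : ∀ s', U s' - U' s' ≤ c) : N.qValue γ U s a - N.qValue γ U' s a ≤ γ * c := by
  rw [qValue, qValue, ← (summable_qValue ha hU).tsum_sub (summable_qValue ha hU')]
  calc ∑' x : S × Rw, (N.p x.1 x.2 s a * (N.rval x.2 + γ * U x.1) -
        N.p x.1 x.2 s a * (N.rval x.2 + γ * U' x.1))
      = γ * ∑' x : S × Rw, N.p x.1 x.2 s a * (U x.1 - U' x.1) := by
        rw [← tsum_mul_left]; exact tsum_congr fun x => by ring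
    _ ≤ γ * c := mul_le_mul_of_nonneg_left
        (tsum_p_mul_le ha (K := K + K') (fun x => (abs_sub _ _).trans (add_le_add (hU _) (hU' _)))
          fun x => h x.1) hγ0

lemma IsPolicy.bellman_sub_bellman_le (hπ : N.IsPolicy π) (hγ0 : 0 ≤ γ) {U U' : S → ℝ}
    {K K' c : ℝ} (hU : ∀ s', |U s'| ≤ K) (hU' : ∀ s', |U' s'| ≤ K')
    (h : ∀ s', U s' - U' s' ≤ c) (s : S) :
    N.bellman γ π U s - N.bellman γ π U' s ≤ γ * c := by
  rw [bellman, bellman, ← sum_sub_distrib]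
  simp_rw [← mul_sub]
  exact hπ.sum_mul_le s fun a ha => qValue_sub_qValue_le hγ0 ha hU hU' h

/-- `T_π` is a `γ`-contraction in the sup norm, so the gap `U - U'` between a bounded subsolution
and a bounded supersolution is at most `γ ^ n * (K + K')` for every `n`. -/
lemma IsPolicy.le_of_le_bellman_of_bellman_le (hπ : N.IsPolicy π) (hγ0 : 0 ≤ γ) (hγ1 : γ < 1)
    {U U' : S → ℝ} {K K' : ℝ} (hU : ∀ s, |U s| ≤ K) (hU' : ∀ s, |U' s| ≤ K')
    (hsub : ∀ s, U s ≤ N.bellman γ π U s) (hsup : ∀ s, N.bellman γ π U' s ≤ U' s) (s : S) :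
    U s ≤ U' s := by
  have key : ∀ n : ℕ, ∀ s, U s - U' s ≤ γ ^ n * (K + K') := by
    intro n
    induction n with
    | zero =>
      intro s
      have := abs_le.1 (hU s); have := abs_le.1 (hU' s)
      rw [pow_zero, one_mul]; linarith
    | succ n ih =>
      intro s
      have := hπ.bellman_sub_bellman_le hγ0 hU hU' ih s
      rw [pow_succ, mul_comm _ γ, mul_assoc]
      linarith [hsub s, hsup s]
  have hlim : Filter.Tendsto (fun n : ℕ => γ ^ n * (K + K')) Filter.atTop (nhds 0) := by
    simpa using (tendsto_pow_atTop_nhds_zero_of_lt_one hγ0 hγ1).mul_const (K + K')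
  exact sub_nonpos.1 (ge_of_tendsto' hlim fun n => key n s)

lemma IsPolicy.value_le_of_bellman_le (hπ : N.IsPolicy π) (hγ0 : 0 ≤ γ) (hγ1 : γ < 1)
    {W : S → ℝ} {K : ℝ} (hW : ∀ s, |W s| ≤ K) (hsup : ∀ s, N.bellman γ π W s ≤ W s) (s : S) :
    N.value γ π s ≤ W s :=
  have ⟨_, hV⟩ := N.exists_abs_value_le hγ0 hγ1
  hπ.le_of_le_bellman_of_bellman_le hγ0 hγ1 (hV π hπ) hW
    (fun s => (hπ.bellman_value hγ0 hγ1 s).ge) hsup s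

lemma IsPolicy.le_value_of_le_bellman (hπ : N.IsPolicy π) (hγ0 : 0 ≤ γ) (hγ1 : γ < 1)
    {W : S → ℝ} {K : ℝ} (hW : ∀ s, |W s| ≤ K) (hsub : ∀ s, W s ≤ N.bellman γ π W s) (s : S) :
    W s ≤ N.value γ π s :=
  have ⟨_, hV⟩ := N.exists_abs_value_le hγ0 hγ1
  hπ.le_of_le_bellman_of_bellman_le hγ0 hγ1 hW (hV π hπ) hsub
    (fun s => (hπ.bellman_value hγ0 hγ1 s).le) s

lemma IsPolicy.value_eq_of_bellman_eq (hπ : N.IsPolicy π) (hγ0 : 0 ≤ γ) (hγ1 : γ < 1)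
    {W : S → ℝ} {K : ℝ} (hW : ∀ s, |W s| ≤ K) (hfix : ∀ s, N.bellman γ π W s = W s) :
    N.value γ π = W :=
  funext fun s => le_antisymm (hπ.value_le_of_bellman_le hγ0 hγ1 hW (fun s => (hfix s).le) s)
    (hπ.le_value_of_le_bellman hγ0 hγ1 hW (fun s => (hfix s).ge) s)

end Comparison

section Optimality

variable {N} {π : S → A → ℝ} {γ : ℝ}

lemma IsOptimal.value_le (hopt : N.IsOptimal γ π) (hγ0 : 0 ≤ γ) (hγ1 : γ < 1)
    {μ : S → A → ℝ} (hμ : N.IsPolicy μ) (s : S) : N.value γ μ s ≤ N.value γ π s := by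
  obtain ⟨K, hK⟩ := N.exists_abs_value_le hγ0 hγ1
  rw [hopt.2 s]
  refine le_ciSup (f := fun μ : {μ // N.IsPolicy μ} => N.value γ μ.1 s) ⟨K, ?_⟩ ⟨μ, hμ⟩
  rintro _ ⟨ν, rfl⟩
  exact (abs_le.1 (hK ν.1 ν.2 s)).2

lemma isOptimal_of_forall_value_le (hπ : N.IsPolicy π)
    (h : ∀ μ, N.IsPolicy μ → ∀ s, N.value γ μ s ≤ N.value γ π s) : N.IsOptimal γ π := by
  have : Nonempty {μ // N.IsPolicy μ} := ⟨⟨π, hπ⟩⟩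
  refine ⟨hπ, fun s => le_antisymm ?_ (ciSup_le fun μ => h μ.1 μ.2 s)⟩
  refine le_ciSup (f := fun μ : {μ // N.IsPolicy μ} => N.value γ μ.1 s) ⟨N.value γ π s, ?_⟩
    ⟨π, hπ⟩
  rintro _ ⟨μ, rfl⟩
  exact h μ.1 μ.2 s

lemma IsPolicy.update_single [DecidableEq S] [DecidableEq A] (hπ : N.IsPolicy π) {s : S}
    {a : A} (ha : a ∈ N.adm s) : N.IsPolicy (Function.update π s (Pi.single a 1)) := by
  refine ⟨fun t b => ?_, fun t b hb => ?_, fun t => ?_⟩ <;> by_cases ht : t = s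
  · subst ht; simp only [Function.update_self, Pi.single_apply]; split_ifs <;> simp
  · simpa [ht] using hπ.1 t b
  · subst ht
    simp only [Function.update_self, Pi.single_apply, ite_eq_right_iff, one_ne_zero]
    rintro rfl; exact hb ha
  · simpa [ht] using hπ.2.1 t b hb
  · subst ht; simp [ha]
  · simpa [ht] using hπ.2.2 t

/-- Policy improvement: if `a` improved on `V_π` at `s`, the policy that plays `a` at `s` and
follows `π` elsewhere would beat `π` at `s`. -/
lemma IsOptimal.qValue_le (hopt : N.IsOptimal γ π) (hγ0 : 0 ≤ γ) (hγ1 : γ < 1) {s : S} {a : A}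
    (ha : a ∈ N.adm s) : N.qValue γ (N.value γ π) s a ≤ N.value γ π s := by
  classical
  by_contra! hlt
  set μ := Function.update π s (Pi.single a 1)
  have hμ : N.IsPolicy μ := hopt.1.update_single ha
  have hμs : ∀ W, N.bellman γ μ W s = N.qValue γ W s a := fun W => by
    simp [bellman, μ, Pi.single_apply, ha]
  have hμt : ∀ W t, t ≠ s → N.bellman γ μ W t = N.bellman γ π W t := fun W t ht => by
    simp [bellman, μ, ht]
  obtain ⟨K, hK⟩ := N.exists_abs_value_le hγ0 hγ1
  have hle : ∀ t, N.value γ π t ≤ N.value γ μ t :=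
    hμ.le_value_of_le_bellman hγ0 hγ1 (hK π hopt.1) fun t => by
      by_cases ht : t = s
      · subst ht; rw [hμs]; exact hlt.le
      · rw [hμt _ t ht, hopt.1.bellman_value hγ0 hγ1]
  have hmono : N.qValue γ (N.value γ π) s a ≤ N.qValue γ (N.value γ μ) s a := by
    have := qValue_sub_qValue_le hγ0 ha (hK π hopt.1) (hK μ hμ) (c := 0)
      fun t => sub_nonpos.2 (hle t)
    linarith
  have hμs' : N.value γ μ s = N.qValue γ (N.value γ μ) s a := by
    rw [← hμs, hμ.bellman_value hγ0 hγ1]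
  linarith [hopt.value_le hγ0 hγ1 hμ s]

lemma isOptimal_of_qValue_le (hπ : N.IsPolicy π) (hγ0 : 0 ≤ γ) (hγ1 : γ < 1)
    (h : ∀ s a, a ∈ N.adm s → N.qValue γ (N.value γ π) s a ≤ N.value γ π s) :
    N.IsOptimal γ π :=
  have ⟨_, hK⟩ := N.exists_abs_value_le hγ0 hγ1
  isOptimal_of_forall_value_le hπ fun _ hμ =>
    hμ.value_le_of_bellman_le hγ0 hγ1 (hK π hπ) fun s => hμ.sum_mul_le s fun a ha => h s a ha

end Optimality

end MDP

namespace MDP.Relabeling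

open Finset

variable {S A S' A' Rw : Type*} {M : MDP S A Rw} {Mt : MDP S' A' Rw} (h : M.Relabeling Mt)
  {γ : ℝ} {ρ : S' → A' → ℝ} {σ : S → A → ℝ}

lemma g_mem_adm {s : S} {a : A} (ha : a ∈ M.adm s) : h.g s a ∈ Mt.adm (h.f s) := by
  simpa using (h.g_bij s).mapsTo (by simpa using ha)

lemma sum_adm (s : S) (F : A' → ℝ) :
    ∑ a ∈ M.adm s, F (h.g s a) = ∑ a' ∈ Mt.adm (h.f s), F a' :=
  sum_nbij (h.g s) (fun _ => h.g_mem_adm) (by simpa using (h.g_bij s).injOn)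
    (by simpa using (h.g_bij s).surjOn) fun _ _ => rfl

lemma qValue_comp {s : S} {a : A} (ha : a ∈ M.adm s) (W : S' → ℝ) :
    M.qValue γ (W ∘ h.f) s a = Mt.qValue γ W (h.f s) (h.g s a) := by
  rw [qValue, qValue, ← ((Equiv.ofBijective h.f h.f_bij).prodCongr (Equiv.refl Rw)).tsum_eq]
  exact tsum_congr fun x => by simp [h.dyn s a ha, h.rval_eq]

variable (hσ : ∀ s a, a ∈ M.adm s → σ s a = ρ (h.f s) (h.g s a))
include hσ

lemma isPolicy (hρ : Mt.IsPolicy ρ) (hσ0 : ∀ s a, a ∉ M.adm s → σ s a = 0) : M.IsPolicy σ := by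
  refine ⟨fun s a => ?_, hσ0, fun s => ?_⟩
  · by_cases ha : a ∈ M.adm s
    · rw [hσ s a ha]; exact hρ.1 _ _
    · rw [hσ0 s a ha]
  · rw [sum_congr rfl fun a ha => hσ s a ha, h.sum_adm s (ρ (h.f s)), hρ.2.2]

lemma bellman_comp (W : S' → ℝ) (s : S) :
    M.bellman γ σ (W ∘ h.f) s = Mt.bellman γ ρ W (h.f s) := by
  rw [bellman, bellman, ← h.sum_adm s fun a' => ρ (h.f s) a' * Mt.qValue γ W (h.f s) a']
  exact sum_congr rfl fun a ha => by rw [hσ s a ha, h.qValue_comp ha]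

lemma value_eq (hρ : Mt.IsPolicy ρ) (hσ0 : ∀ s a, a ∉ M.adm s → σ s a = 0)
    (hγ0 : 0 ≤ γ) (hγ1 : γ < 1) : M.value γ σ = Mt.value γ ρ ∘ h.f :=
  have ⟨_, hK⟩ := Mt.exists_abs_value_le hγ0 hγ1
  (h.isPolicy hσ hρ hσ0).value_eq_of_bellman_eq hγ0 hγ1 (fun s => hK ρ hρ (h.f s)) fun s => by
    rw [h.bellman_comp hσ, Function.comp_apply, hρ.bellman_value hγ0 hγ1]

lemma isOptimal (hρ : Mt.IsOptimal γ ρ) (hσ0 : ∀ s a, a ∉ M.adm s → σ s a = 0)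
    (hγ0 : 0 ≤ γ) (hγ1 : γ < 1) : M.IsOptimal γ σ :=
  isOptimal_of_qValue_le (h.isPolicy hσ hρ.1 hσ0) hγ0 hγ1 fun s a ha => by
    rw [h.value_eq hσ hρ.1 hσ0 hγ0 hγ1, h.qValue_comp ha]
    exact hρ.qValue_le hγ0 hγ1 (h.g_mem_adm ha)

end MDP.Relabeling

namespace MDP.VisibleSymmetry

open Finset

variable {S' A' Rw' : Type*} {M' : MDP S' A' Rw'} (V : M'.VisibleSymmetry)
  (Q : MDP (Quotient V.eqS) (Quotient V.eqP) Rw')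

structure IsQuotientMDP : Prop where
  rval_eq : Q.rval = M'.rval
  mem_adm_iff : ∀ (q : M'.Pairs) (X : Quotient V.eqS),
    Quotient.mk V.eqP q ∈ Q.adm X ↔ Quotient.mk V.eqS q.1.1 = X
  p_mk : ∀ (q : M'.Pairs) (s' : S') (r : Rw'),
    Q.p (Quotient.mk V.eqS s') r (Quotient.mk V.eqS q.1.1) (Quotient.mk V.eqP q) =
      ∑' x : {x : S' // V.eqS.r x s'}, M'.p x.1 r q.1.1 q.1.2

variable {V Q}

lemma IsQuotientMDP.qValue_mk (hQ : V.IsQuotientMDP Q) {γ : ℝ} (q : M'.Pairs)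
    {W : Quotient V.eqS → ℝ} {K : ℝ} (hW : ∀ X, |W X| ≤ K) :
    Q.qValue γ W (Quotient.mk V.eqS q.1.1) (Quotient.mk V.eqP q) =
      M'.qValue γ (W ∘ Quotient.mk V.eqS) q.1.1 q.1.2 := by
  obtain ⟨C, hC⟩ := M'.rval_bdd
  rw [qValue, qValue, hQ.rval_eq]
  refine Eq.symm <| (tsum_mul_comp_eq_tsum_fiber (Prod.map (Quotient.mk V.eqS) id)
    (summable_p q.2) (u := fun y => M'.rval y.2 + γ * W y.1) (K := C + |γ| * K) fun y => by
      refine (abs_add_le _ _).trans (add_le_add (hC _) ?_)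
      rw [abs_mul]; exact mul_le_mul_of_nonneg_left (hW _) (abs_nonneg γ)).trans <|
    tsum_congr fun ⟨X, r⟩ => ?_
  induction X using Quotient.ind with
  | _ s' =>
    let e : {x : S' // V.eqS.r x s'} ≃
        (Prod.map (Quotient.mk V.eqS) id ⁻¹' {(Quotient.mk V.eqS s', r)} : Set (S' × Rw')) :=
      { toFun := fun x => ⟨(x.1, r), by simpa using Quotient.sound x.2⟩
        invFun := fun y => ⟨y.1.1, Quotient.exact (congrArg Prod.fst y.2)⟩
        left_inv := fun _ => rfl
        right_inv := fun y => Subtype.ext (Prod.ext rfl (congrArg Prod.snd y.2).symm) }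
    rw [hQ.p_mk, ← e.tsum_eq]
    rfl

open Classical in
lemma N_eq_card (t : S') {a : A'} (ha : a ∈ M'.adm t) :
    V.N t a ha = #{x ∈ (M'.adm t).attach |
      Quotient.mk V.eqP ⟨(t, x.1), x.2⟩ = Quotient.mk V.eqP ⟨(t, a), ha⟩} := by
  rw [N, ← card_map (Function.Embedding.subtype _), ← Set.ncard_coe_finset]
  congr 1
  ext a'
  simp [Quotient.eq, V.eqP.comm (x := ⟨(t, a), ha⟩)]

lemma IsQuotientMDP.sum_div_N (hQ : V.IsQuotientMDP Q) (t : S') (F : Quotient V.eqP → ℝ) :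
    ∑ x ∈ (M'.adm t).attach, F (Quotient.mk V.eqP ⟨(t, x.1), x.2⟩) / (V.N t x.1 x.2 : ℝ) =
      ∑ c ∈ Q.adm (Quotient.mk V.eqS t), F c := by
  classical
  let φ : {a // a ∈ M'.adm t} → Quotient V.eqP := fun x => Quotient.mk V.eqP ⟨(t, x.1), x.2⟩
  rw [← sum_fiberwise_of_maps_to (g := φ) fun x _ => (hQ.mem_adm_iff _ (Quotient.mk V.eqS t)).2 rfl]
  refine sum_congr rfl fun c hc => ?_
  obtain ⟨q, rfl⟩ := Quotient.exists_rep c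
  obtain ⟨a, ha, hqa⟩ := V.lift_action q t (Quotient.exact ((hQ.mem_adm_iff q _).1 hc))
  have hq : Quotient.mk V.eqP q = φ ⟨a, ha⟩ := Quotient.sound hqa
  have hN : ∀ x ∈ {x ∈ (M'.adm t).attach | φ x = φ ⟨a, ha⟩},
      F (φ x) / (V.N t x.1 x.2 : ℝ) =
        F (φ ⟨a, ha⟩) / #{x ∈ (M'.adm t).attach | φ x = φ ⟨a, ha⟩} := by
    intro x hx
    have hx := (mem_filter.1 hx).2
    rw [hx, N_eq_card t x.2, show Quotient.mk V.eqP ⟨(t, x.1), x.2⟩ = φ ⟨a, ha⟩ from hx]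
  rw [hq, sum_congr rfl hN, sum_const, nsmul_eq_mul, mul_div_cancel₀]
  exact Nat.cast_ne_zero.2 (card_ne_zero.2 ⟨⟨a, ha⟩, by simp⟩)

lemma N_eq_one_of_simple (hV : V.Simple) (t : S') {a : A'} (ha : a ∈ M'.adm t) :
    V.N t a ha = 1 := by
  rw [N, Set.ncard_eq_one]
  refine ⟨a, Set.eq_singleton_iff_unique_mem.2 ⟨⟨ha, V.eqP.refl _⟩, ?_⟩⟩
  rintro a' ⟨_, hr⟩
  exact (hV _ _ hr).symm

variable (V) in
open Classical in
noncomputable def liftPolicy (ρ : Quotient V.eqS → Quotient V.eqP → ℝ) (t : S') (a : A') : ℝ :=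
  if ha : a ∈ M'.adm t then
    ρ (Quotient.mk V.eqS t) (Quotient.mk V.eqP ⟨(t, a), ha⟩) / (V.N t a ha : ℝ)
  else 0

variable {ρ : Quotient V.eqS → Quotient V.eqP → ℝ} {γ : ℝ}

lemma liftPolicy_of_mem {t : S'} {a : A'} (ha : a ∈ M'.adm t) :
    V.liftPolicy ρ t a =
      ρ (Quotient.mk V.eqS t) (Quotient.mk V.eqP ⟨(t, a), ha⟩) / (V.N t a ha : ℝ) :=
  dif_pos ha

lemma sum_liftPolicy_mul (t : S') (G : A' → ℝ) :
    ∑ a ∈ M'.adm t, V.liftPolicy ρ t a * G a =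
      ∑ x ∈ (M'.adm t).attach, ρ (Quotient.mk V.eqS t) (Quotient.mk V.eqP ⟨(t, x.1), x.2⟩) *
        G x.1 / (V.N t x.1 x.2 : ℝ) := by
  rw [← sum_attach]
  exact sum_congr rfl fun x _ => by rw [liftPolicy_of_mem x.2, div_mul_eq_mul_div]

lemma IsQuotientMDP.isPolicy_liftPolicy (hQ : V.IsQuotientMDP Q) (hρ : Q.IsPolicy ρ) :
    M'.IsPolicy (V.liftPolicy ρ) := by
  refine ⟨fun t a => ?_, fun t a ha => dif_neg ha, fun t => ?_⟩
  · unfold liftPolicy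
    split_ifs
    exacts [div_nonneg (hρ.1 _ _) (Nat.cast_nonneg _), le_rfl]
  · have h := sum_liftPolicy_mul (ρ := ρ) t fun _ => 1
    simp only [mul_one] at h
    rw [h, hQ.sum_div_N t, hρ.2.2]

lemma IsQuotientMDP.bellman_liftPolicy (hQ : V.IsQuotientMDP Q) {W : Quotient V.eqS → ℝ}
    {K : ℝ} (hW : ∀ X, |W X| ≤ K) (t : S') :
    M'.bellman γ (V.liftPolicy ρ) (W ∘ Quotient.mk V.eqS) t =
      Q.bellman γ ρ W (Quotient.mk V.eqS t) := by
  rw [bellman, sum_liftPolicy_mul, bellman,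
    ← hQ.sum_div_N t fun c => ρ (Quotient.mk V.eqS t) c * Q.qValue γ W (Quotient.mk V.eqS t) c]
  exact sum_congr rfl fun x _ => by rw [hQ.qValue_mk ⟨(t, x.1), x.2⟩ hW]

lemma IsQuotientMDP.value_liftPolicy (hQ : V.IsQuotientMDP Q) (hρ : Q.IsPolicy ρ)
    (hγ0 : 0 ≤ γ) (hγ1 : γ < 1) :
    M'.value γ (V.liftPolicy ρ) = Q.value γ ρ ∘ Quotient.mk V.eqS :=
  have ⟨_, hK⟩ := Q.exists_abs_value_le hγ0 hγ1
  (hQ.isPolicy_liftPolicy hρ).value_eq_of_bellman_eq hγ0 hγ1 (fun t => hK ρ hρ _) fun t => by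
    rw [hQ.bellman_liftPolicy (hK ρ hρ), Function.comp_apply, hρ.bellman_value hγ0 hγ1]

lemma IsQuotientMDP.isOptimal_liftPolicy (hQ : V.IsQuotientMDP Q) (hρ : Q.IsOptimal γ ρ)
    (hγ0 : 0 ≤ γ) (hγ1 : γ < 1) : M'.IsOptimal γ (V.liftPolicy ρ) :=
  have ⟨_, hK⟩ := Q.exists_abs_value_le hγ0 hγ1
  isOptimal_of_qValue_le (hQ.isPolicy_liftPolicy hρ.1) hγ0 hγ1 fun t a ha => by
    rw [hQ.value_liftPolicy hρ.1 hγ0 hγ1, ← hQ.qValue_mk ⟨(t, a), ha⟩ (hK ρ hρ.1)]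
    exact hρ.qValue_le hγ0 hγ1 ((hQ.mem_adm_iff _ _).2 rfl)

end MDP.VisibleSymmetry

theorem hiddenSymmetry_pullback_optimal_general
    {S A S' A' Rw Rw' : Type*}
    (M : MDP S A Rw) (Mt : MDP S' A' Rw) (M' : MDP S' A' Rw')
    (γ : ℝ) (hγ0 : 0 ≤ γ) (hγ1 : γ < 1)
    (h : M.Relabeling Mt)
    (hadm : Mt.adm = M'.adm)
    (hopt : ∀ π : S' → A' → ℝ, Mt.IsOptimal γ π ↔ M'.IsOptimal γ π)
    (hg : ∀ (s : S) (a : A), a ∈ M.adm s → h.g s a ∈ M'.adm (h.f s))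
    (V : M'.VisibleSymmetry)
    (Q : MDP (Quotient V.eqS) (Quotient V.eqP) Rw')
    (hrval : Q.rval = M'.rval)
    (hQadm : ∀ (q : M'.Pairs) (X : Quotient V.eqS),
      Quotient.mk V.eqP q ∈ Q.adm X ↔ Quotient.mk V.eqS q.1.1 = X)
    (hQp : ∀ (q : M'.Pairs) (s' : S') (r : Rw'),
      Q.p (Quotient.mk V.eqS s') r (Quotient.mk V.eqS q.1.1) (Quotient.mk V.eqP q) =
        ∑' x : {x : S' // V.eqS.r x s'}, M'.p x.1 r q.1.1 q.1.2)
    (π : Quotient V.eqS → Quotient V.eqP → ℝ) (hπ : Q.IsPolicy π)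
    (π' : S → A → ℝ)
    (hπ'adm : ∀ (s : S) (a : A) (ha : a ∈ M.adm s),
      π' s a = π (Quotient.mk V.eqS (h.f s))
          (Quotient.mk V.eqP ⟨(h.f s, h.g s a), hg s a ha⟩) /
        (V.N (h.f s) (h.g s a) (hg s a ha) : ℝ))
    (hπ'nadm : ∀ (s : S) (a : A), a ∉ M.adm s → π' s a = 0) :
    M.IsPolicy π' ∧
      (Q.IsOptimal γ π → M.IsOptimal γ π') ∧
      (V.Simple → ∀ (s : S) (a : A) (ha : a ∈ M.adm s),
        π' s a = π (Quotient.mk V.eqS (h.f s))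
          (Quotient.mk V.eqP ⟨(h.f s, h.g s a), hg s a ha⟩)) := by
  have hQ : V.IsQuotientMDP Q := ⟨hrval, hQadm, hQp⟩
  have hσ : ∀ s a, a ∈ M.adm s → π' s a = V.liftPolicy π (h.f s) (h.g s a) := fun s a ha => by
    rw [hπ'adm s a ha, MDP.VisibleSymmetry.liftPolicy_of_mem]
  have hlift : Mt.IsPolicy (V.liftPolicy π) := by
    simpa only [MDP.IsPolicy, hadm] using hQ.isPolicy_liftPolicy hπ
  refine ⟨h.isPolicy hσ hlift hπ'nadm, fun hopt_π => ?_, fun hV s a ha => ?_⟩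
  · have hopt_lift := (hopt _).2 (hQ.isOptimal_liftPolicy hopt_π hγ0 hγ1)
    exact h.isOptimal hσ hopt_lift hπ'nadm hγ0 hγ1
  · rw [hπ'adm s a ha, MDP.VisibleSymmetry.N_eq_one_of_simple hV, Nat.cast_one, div_one]

/-- Let `M`, `M̃`, `M'` be MDPs with the same discount factor `γ ∈ [0,1)`,
where `M̃` is a relabeled variant of `M` via `h = (f, {g_s})`, `M̃` and `M'` have the same
transition structure and the same optimal policies, and `~` is a visible symmetry `V` of
`M'` (so `(M', ~)` is a hidden symmetry of `M`); let `Q = M'/~` be the quotient MDP.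
For a policy `π` in `M'/~` the pullback `π'(s,a) = π([(f s, g_s a)]_{Ψ'}) / N_{Ψ'}(f s, g_s a)`
(extended by `0` off admissible pairs) is a policy in `M`; if `π` is optimal in `M'/~` then
`π'` is optimal in `M`; and if `~` is simple then `π'(s,a) = π(g_s(a) | [f s])`. -/
theorem hiddenSymmetry_pullback_optimal
    {S A S' A' Rw Rw' : Type*} [Countable S] [Countable S'] [Countable Rw] [Countable Rw']
    (M : MDP S A Rw) (Mt : MDP S' A' Rw) (M' : MDP S' A' Rw')
    (γ : ℝ) (hγ0 : 0 ≤ γ) (hγ1 : γ < 1)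
    (h : M.Relabeling Mt)
    (hadm : Mt.adm = M'.adm)
    (htrans : ∀ (s : S') (a : A'), a ∈ Mt.adm s → ∀ s' : S',
      (∑' r : Rw, Mt.p s' r s a) = ∑' r : Rw', M'.p s' r s a)
    (hopt : ∀ π : S' → A' → ℝ, Mt.IsOptimal γ π ↔ M'.IsOptimal γ π)
    (hg : ∀ (s : S) (a : A), a ∈ M.adm s → h.g s a ∈ M'.adm (h.f s))
    (V : M'.VisibleSymmetry)
    (Q : MDP (Quotient V.eqS) (Quotient V.eqP) Rw')
    (hrval : Q.rval = M'.rval)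
    (hQadm : ∀ (q : M'.Pairs) (X : Quotient V.eqS),
      Quotient.mk V.eqP q ∈ Q.adm X ↔ Quotient.mk V.eqS q.1.1 = X)
    (hQp : ∀ (q : M'.Pairs) (s' : S') (r : Rw'),
      Q.p (Quotient.mk V.eqS s') r (Quotient.mk V.eqS q.1.1) (Quotient.mk V.eqP q) =
        ∑' x : {x : S' // V.eqS.r x s'}, M'.p x.1 r q.1.1 q.1.2)
    (π : Quotient V.eqS → Quotient V.eqP → ℝ) (hπ : Q.IsPolicy π)
    (π' : S → A → ℝ)
    (hπ'adm : ∀ (s : S) (a : A) (ha : a ∈ M.adm s),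
      π' s a = π (Quotient.mk V.eqS (h.f s))
          (Quotient.mk V.eqP ⟨(h.f s, h.g s a), hg s a ha⟩) /
        (V.N (h.f s) (h.g s a) (hg s a ha) : ℝ))
    (hπ'nadm : ∀ (s : S) (a : A), a ∉ M.adm s → π' s a = 0) :
    M.IsPolicy π' ∧
      (Q.IsOptimal γ π → M.IsOptimal γ π') ∧
      (V.Simple → ∀ (s : S) (a : A) (ha : a ∈ M.adm s),
        π' s a = π (Quotient.mk V.eqS (h.f s))
          (Quotient.mk V.eqP ⟨(h.f s, h.g s a), hg s a ha⟩)) :=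
  hiddenSymmetry_pullback_optimal_general M Mt M' γ hγ0 hγ1 h hadm hopt hg V Q hrval hQadm hQp π hπ
    π' hπ'adm hπ'nadm
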